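/- arXiv:1912.04951 — 3 statements merged into one kernel-verified Lean document; each statement's English description precedes it below -/
import Mathlib

section
/- Let p be a real polynomial of degree n ≥ 2 with only real zeroes and d ≥ 2 distinct zeroes, and let μ₁ < ⋯ < μ_{d−1} be the zeroes of p' that are not zeroes of p. Then p(μⱼ)·p''(μⱼ) < 0 for each j = 1,…,d−1. -/
open Polynomial

/-!
Real-rootedness makes `p` split over `ℝ`, so `p = c · ∏ (X - a)` over its roots. Away from the
roots, logarithmic differentiation gives `p' = p · S₁` and `p'' = p · (S₁² - S₂)` with
`S₁ = ∑ 1 / (x - a)` and `S₂ = ∑ 1 / (x - a)²`.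
At a critical point that is not a root `S₁ = 0`, so `p · p'' = -p² · S₂`, and over `ℝ` the sum
`S₂` is positive as soon as `p` has a root.
-/

namespace Polynomial

section Field

variable {K : Type*} [Field K] {x : K}

theorem eval_multiset_prod_X_sub_C_ne_zero {s : Multiset K} (hx : x ∉ s) :
    (s.map (X - C ·)).prod.eval x ≠ 0 := by
  simpa [eval_multiset_prod, Multiset.prod_eq_zero_iff, sub_eq_zero] using hx

theorem eval_derivative_multiset_prod_X_sub_C {s : Multiset K} (hx : x ∉ s) :
    (derivative (s.map (X - C ·)).prod).eval x =
      (s.map (X - C ·)).prod.eval x * (s.map fun a => 1 / (x - a)).sum := by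
  have hsplit : (s.map (X - C ·)).prod.Splits :=
    Splits.multisetProd fun f hf => by
      obtain ⟨a, -, rfl⟩ := Multiset.mem_map.1 hf
      exact Splits.X_sub_C a
  simpa [roots_multiset_prod_X_sub_C] using
    hsplit.eval_derivative_eq_eval_mul_sum (eval_multiset_prod_X_sub_C_ne_zero hx)

theorem eval_derivative_derivative_multiset_prod_X_sub_C {s : Multiset K} (hx : x ∉ s) :
    (derivative (derivative (s.map (X - C ·)).prod)).eval x =
      (s.map (X - C ·)).prod.eval x *
        ((s.map fun a => 1 / (x - a)).sum ^ 2 - (s.map fun a => 1 / (x - a) ^ 2).sum) := by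
  induction s using Multiset.induction with
  | empty => simp
  | cons a s ih =>
    rw [Multiset.mem_cons, not_or] at hx
    have hxa : x - a ≠ 0 := sub_ne_zero.2 hx.1
    simp only [Multiset.map_cons, Multiset.prod_cons, Multiset.sum_cons, derivative_mul,
      derivative_add, derivative_sub, derivative_X, derivative_C, sub_zero,
      one_mul, eval_add, eval_mul, eval_sub, eval_X, eval_C,
      ih hx.2, eval_derivative_multiset_prod_X_sub_C hx.2]
    field_simp
    ring

variable {p : K[X]}

theorem Splits.eval_derivative_derivative_eq_eval_mul_sum (hp : p.Splits) (hx : p.eval x ≠ 0) :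
    (derivative (derivative p)).eval x =
      p.eval x * ((p.roots.map fun a => 1 / (x - a)).sum ^ 2 -
        (p.roots.map fun a => 1 / (x - a) ^ 2).sum) := by
  have hroots : x ∉ p.roots := fun h => hx (isRoot_of_mem_roots h)
  conv_lhs => rw [hp.eq_prod_roots]
  conv_rhs => arg 1; rw [hp.eq_prod_roots]
  rw [derivative_C_mul, derivative_C_mul, eval_mul, eval_mul, eval_C,
    eval_derivative_derivative_multiset_prod_X_sub_C hroots, mul_assoc]

theorem Splits.eval_mul_eval_derivative_derivative_of_eval_derivative_eq_zero
    (hp : p.Splits) (hx : p.eval x ≠ 0) (hcrit : (derivative p).eval x = 0) :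
    p.eval x * (derivative (derivative p)).eval x =
      -p.eval x ^ 2 * (p.roots.map fun a => 1 / (x - a) ^ 2).sum := by
  have hS₁ : (p.roots.map fun a => 1 / (x - a)).sum = 0 := by
    rw [hp.eval_derivative_eq_eval_mul_sum hx] at hcrit
    exact (mul_eq_zero.1 hcrit).resolve_left hx
  rw [hp.eval_derivative_derivative_eq_eval_mul_sum hx, hS₁]
  ring

end Field

theorem splits_of_forall_isRoot_map_complex_im_eq_zero {p : ℝ[X]}
    (hreal : ∀ z : ℂ, (p.map (algebraMap ℝ ℂ)).IsRoot z → z.im = 0) : p.Splits :=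
  Splits.of_splits_map (algebraMap ℝ ℂ) (IsAlgClosed.splits _) fun z hz =>
    ⟨z.re, Complex.ext rfl (hreal z (mem_roots'.1 hz).2).symm⟩

theorem sum_one_div_sub_sq_roots_pos {p : ℝ[X]} {x y : ℝ} (hx : p.eval x ≠ 0)
    (hy : y ∈ p.roots) : 0 < (p.roots.map fun a => 1 / (x - a) ^ 2).sum := by
  have hpos : ∀ a ∈ p.roots, (0 : ℝ) < 1 / (x - a) ^ 2 := fun a ha => by
    have : x - a ≠ 0 := sub_ne_zero.2 fun h => hx (h ▸ isRoot_of_mem_roots ha)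
    positivity
  simpa using Multiset.sum_lt_sum (f := fun _ => (0 : ℝ))
    (fun a ha => (hpos a ha).le) ⟨y, hy, hpos y hy⟩

end Polynomial

theorem de_gua_critical_points_general (p : ℝ[X])
    (hreal : ∀ z : ℂ, (p.map (algebraMap ℝ ℂ)).IsRoot z → z.im = 0)
    (hdist : ∃ x y : ℝ, x ≠ y ∧ p.IsRoot x ∧ p.IsRoot y) :
    ∀ μ : ℝ, (derivative p).eval μ = 0 → p.eval μ ≠ 0 →
      p.eval μ * (derivative (derivative p)).eval μ < 0 := by
  intro μ hcrit hμ
  obtain ⟨x, -, -, hx, -⟩ := hdist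
  have hp0 : p ≠ 0 := by rintro rfl; exact hμ eval_zero
  have hsplit := splits_of_forall_isRoot_map_complex_im_eq_zero hreal
  rw [hsplit.eval_mul_eval_derivative_derivative_of_eval_derivative_eq_zero hμ hcrit]
  have hS₂ := sum_one_div_sub_sq_roots_pos hμ ((mem_roots hp0).2 hx)
  exact mul_neg_of_neg_of_pos (neg_neg_of_pos (by positivity)) hS₂

/-- Let `p` be a real polynomial of degree `n ≥ 2` with only real zeroes and at
least two distinct zeroes. If `μ` is a zero of `p'` which is not a zero of `p`,
then `p(μ)·p''(μ) < 0`. -/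
theorem de_gua_critical_points (p : ℝ[X]) (n : ℕ) (hn : p.natDegree = n) (hn2 : 2 ≤ n)
    (hreal : ∀ z : ℂ, (p.map (algebraMap ℝ ℂ)).IsRoot z → z.im = 0)
    (hdist : ∃ x y : ℝ, x ≠ y ∧ p.IsRoot x ∧ p.IsRoot y) :
    ∀ μ : ℝ, (derivative p).eval μ = 0 → p.eval μ ≠ 0 →
      p.eval μ * (derivative (derivative p)).eval μ < 0 :=
  de_gua_critical_points_general p hreal hdist
end

section
/- Let p be a real polynomial of degree n ≥ 2 with only real zeroes and d ≥ 2 distinct zeroes. Then the second derivative of R(x) = p(x)p''(x)/(p'(x))² is negative at every real point where p'(x) ≠ 0; i.e., R is strictly concave between consecutive poles. -/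
/-!
Write `p = c ∏ (X - rᵢ)`, `uᵢ = (x - rᵢ)⁻¹` and `Sₖ = ∑ uᵢᵏ`. Differentiating `p p'' / p'²` twice
gives `R'' = -N / p'⁴` with `N` a polynomial in `p, p', …, p⁽⁴⁾`. Away from the roots the ratios
`p⁽ᵏ⁾ / p` are polynomials in the `Sₖ`, and
`N = 6 p⁴ (S₂³ - 2 S₁S₂S₃ + S₁²S₄) = 6 p⁴ ∑ₖ uₖ² (uₖ S₁ - S₂)²`,
which vanishes only if all the `uₖ` coincide; two distinct roots prevent this.
At a root `x`, simple because `p'(x) ≠ 0`, write `p = (X - x) q`: then `N = 6 q⁴ (S₁² + S₂)`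
with the power sums of `q`, positive because `q` still has a root.
-/

open Polynomial

namespace Multiset

variable {R : Type*}

def psum [CommSemiring R] (k : ℕ) (s : Multiset R) : R := (s.map (· ^ k)).sum

@[simp]
theorem psum_cons [CommSemiring R] (k : ℕ) (a : R) (s : Multiset R) :
    psum k (a ::ₘ s) = a ^ k + psum k s := by
  simp [psum]

theorem sum_map_sq_mul_sub_sq [CommRing R] (s : Multiset R) (a b : R) :
    (s.map fun u ↦ u ^ 2 * (u * a - b) ^ 2).sum
      = a ^ 2 * psum 4 s - 2 * a * b * psum 3 s + b ^ 2 * psum 2 s := by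
  induction s using Multiset.induction_on with
  | empty => simp [psum]
  | cons u s ih => simp only [map_cons, sum_cons, psum_cons, ih]; ring

section Ordered

variable [CommRing R] [LinearOrder R] [IsStrictOrderedRing R] {s : Multiset R}

theorem psum_two_pos {a : R} (ha : a ∈ s) (ha0 : a ≠ 0) : 0 < psum 2 s :=
  (sq_pos_of_ne_zero ha0).trans_le <|
    single_le_sum (fun _ hx ↦ by obtain ⟨u, -, rfl⟩ := mem_map.1 hx; positivity) _
      (mem_map_of_mem _ ha)

theorem psum_sextic_pos {a b : R} (ha : a ∈ s) (hb : b ∈ s) (ha0 : a ≠ 0) (hb0 : b ≠ 0)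
    (hab : a ≠ b) :
    0 < psum 2 s ^ 3 - 2 * psum 1 s * psum 2 s * psum 3 s + psum 1 s ^ 2 * psum 4 s := by
  set S₁ := psum 1 s
  set S₂ := psum 2 s
  have hS₂ : 0 < S₂ := psum_two_pos ha ha0
  obtain ⟨c, hc, hc0, hcS⟩ : ∃ c ∈ s, c ≠ 0 ∧ c * S₁ - S₂ ≠ 0 := by
    by_contra! h
    have h₁ : (a - b) * S₁ = 0 := by linear_combination h a ha ha0 - h b hb hb0
    have hS₁ : S₁ = 0 := (mul_eq_zero.1 h₁).resolve_left (sub_ne_zero.2 hab)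
    have := h a ha ha0
    rw [hS₁] at this
    linarith
  calc 0 < c ^ 2 * (c * S₁ - S₂) ^ 2 := by positivity
    _ ≤ (s.map fun u ↦ u ^ 2 * (u * S₁ - S₂) ^ 2).sum :=
      single_le_sum (fun _ hx ↦ by obtain ⟨u, -, rfl⟩ := mem_map.1 hx; positivity) _
        (mem_map_of_mem _ hc)
    _ = _ := by rw [sum_map_sq_mul_sub_sq]; ring

end Ordered

end Multiset

open Multiset

namespace Polynomial

variable {R K : Type*}

theorem iterate_derivative_X_sub_C_mul [CommRing R] (r : R) (q : R[X]) (j : ℕ) :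
    derivative^[j + 1] ((X - C r) * q)
      = (X - C r) * derivative^[j + 1] q + (j + 1) • derivative^[j] q := by
  induction j with
  | zero => simp [derivative_mul, add_comm]
  | succ j ih =>
    rw [Function.iterate_succ_apply', ih]
    simp only [derivative_add, derivative_mul, derivative_smul, derivative_X_sub_C, one_mul,
      ← Function.iterate_succ_apply' derivative, Nat.succ_eq_add_one, add_smul, one_smul]
    abel

theorem eval_iterate_derivative_X_sub_C_mul [CommRing R] (r x : R) (q : R[X]) (j : ℕ) :
    eval x (derivative^[j + 1] ((X - C r) * q))
      = (x - r) * eval x (derivative^[j + 1] q) + (j + 1) * eval x (derivative^[j] q) := by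
  simp [iterate_derivative_X_sub_C_mul, nsmul_eq_mul]

theorem eval_multiset_prod_X_sub_C_ne_zero_s13 [CommRing R] [IsDomain R] {x : R} {t : Multiset R}
    (hx : x ∉ t) : eval x (t.map fun r ↦ X - C r).prod ≠ 0 := by
  simpa [eval_multiset_prod, prod_eq_zero_iff, sub_eq_zero, eq_comm] using hx

theorem eval_iterate_derivative_prod_X_sub_C [Field K] {x : K} {t : Multiset K} (hx : x ∉ t) :
    let P := (t.map fun r ↦ X - C r).prod
    let S k := psum k (t.map fun r ↦ (x - r)⁻¹)
    eval x (derivative^[1] P) = eval x P * S 1 ∧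
    eval x (derivative^[2] P) = eval x P * (S 1 ^ 2 - S 2) ∧
    eval x (derivative^[3] P) = eval x P * (S 1 ^ 3 - 3 * S 1 * S 2 + 2 * S 3) ∧
    eval x (derivative^[4] P) = eval x P * (S 1 ^ 4 - 6 * S 1 ^ 2 * S 2 + 3 * S 2 ^ 2
      + 8 * S 1 * S 3 - 6 * S 4) := by
  induction t using Multiset.induction_on with
  | empty => simp [psum]
  | cons r t ih =>
    obtain ⟨h₁, h₂, h₃, h₄⟩ := ih (fun h ↦ hx (mem_cons_of_mem h))
    have hr : x - r ≠ 0 := sub_ne_zero.2 fun h ↦ hx (h ▸ mem_cons_self r t)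
    simp only [map_cons, prod_cons, psum_cons, eval_iterate_derivative_X_sub_C_mul, eval_mul,
      eval_sub, eval_X, eval_C, Function.iterate_zero_apply, h₁, h₂, h₃, h₄]
    refine ⟨?_, ?_, ?_, ?_⟩ <;> field_simp <;> ring

noncomputable def ratioRNum [CommRing R] (p : R[X]) (x : R) : R :=
  3 * eval x (derivative^[1] p) ^ 2 * eval x (derivative^[2] p) ^ 2
    - 2 * eval x (derivative^[1] p) ^ 3 * eval x (derivative^[3] p)
    + 6 * eval x p * eval x (derivative^[1] p) * eval x (derivative^[2] p)
      * eval x (derivative^[3] p)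
    - 6 * eval x p * eval x (derivative^[2] p) ^ 3
    - eval x p * eval x (derivative^[1] p) ^ 2 * eval x (derivative^[4] p)

theorem ratioRNum_C_mul [CommRing R] (a x : R) (p : R[X]) :
    ratioRNum (C a * p) x = a ^ 4 * ratioRNum p x := by
  simp only [ratioRNum, iterate_derivative_C_mul, eval_mul, eval_C]
  ring

theorem ratioRNum_X_sub_C_mul [CommRing R] (x : R) (q : R[X]) :
    ratioRNum ((X - C x) * q) x
      = 6 * eval x q ^ 2 * (2 * eval x (derivative^[1] q) ^ 2
        - eval x q * eval x (derivative^[2] q)) := by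
  simp only [ratioRNum, eval_iterate_derivative_X_sub_C_mul, eval_mul, eval_sub, eval_X, eval_C,
    sub_self, Function.iterate_zero_apply]
  ring

section Ordered

variable [Field K] [LinearOrder K] [IsStrictOrderedRing K]

theorem ratioRNum_X_sub_C_mul_prod_pos {x r : K} {s : Multiset K} (hx : x ∉ s) (hr : r ∈ s) :
    0 < ratioRNum ((X - C x) * (s.map fun r ↦ X - C r).prod) x := by
  obtain ⟨h₁, h₂, -, -⟩ := eval_iterate_derivative_prod_X_sub_C hx
  have hxr : x - r ≠ 0 := sub_ne_zero.2 fun h ↦ hx (h ▸ hr)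
  have hS₂ := psum_two_pos (mem_map_of_mem (fun r ↦ (x - r)⁻¹) hr) (inv_ne_zero hxr)
  have hq := eval_multiset_prod_X_sub_C_ne_zero_s13 hx
  rw [ratioRNum_X_sub_C_mul, h₁, h₂]
  have := mul_pos (pow_pos (sq_pos_of_ne_zero hq) 2)
    (add_pos_of_nonneg_of_pos (sq_nonneg (psum 1 (s.map fun r ↦ (x - r)⁻¹))) hS₂)
  linear_combination 6 * this

theorem ratioRNum_prod_pos {x a b : K} {t : Multiset K} (hx : x ∉ t) (ha : a ∈ t) (hb : b ∈ t)
    (hab : a ≠ b) : 0 < ratioRNum (t.map fun r ↦ X - C r).prod x := by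
  obtain ⟨h₁, h₂, h₃, h₄⟩ := eval_iterate_derivative_prod_X_sub_C hx
  have hxa : x - a ≠ 0 := sub_ne_zero.2 fun h ↦ hx (h ▸ ha)
  have hxb : x - b ≠ 0 := sub_ne_zero.2 fun h ↦ hx (h ▸ hb)
  have hQ := psum_sextic_pos (mem_map_of_mem (fun r ↦ (x - r)⁻¹) ha)
    (mem_map_of_mem (fun r ↦ (x - r)⁻¹) hb) (inv_ne_zero hxa) (inv_ne_zero hxb)
    fun h ↦ hab (sub_right_inj.1 (inv_inj.1 h))
  have hP := eval_multiset_prod_X_sub_C_ne_zero_s13 hx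
  rw [ratioRNum, h₁, h₂, h₃, h₄]
  have := mul_pos (pow_pos (sq_pos_of_ne_zero hP) 2) hQ
  linear_combination 6 * this

theorem ratioRNum_pos_of_splits {p : K[X]} (hp : p.Splits) {x a b : K}
    (hx : eval x (derivative^[1] p) ≠ 0) (ha : p.IsRoot a) (hb : p.IsRoot b) (hab : a ≠ b) :
    0 < ratioRNum p x := by
  classical
  have hp0 : p ≠ 0 := by rintro rfl; simp at hx
  have hlc : p.leadingCoeff ≠ 0 := leadingCoeff_ne_zero.2 hp0
  have hat : a ∈ p.roots := mem_roots'.2 ⟨hp0, ha⟩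
  have hbt : b ∈ p.roots := mem_roots'.2 ⟨hp0, hb⟩
  rw [hp.eq_prod_roots] at hx ⊢
  rw [ratioRNum_C_mul]
  refine mul_pos (by positivity) ?_
  set t := p.roots
  by_cases hxt : x ∈ t
  · have hsimple : x ∉ t.erase x := by
      intro h
      apply hx
      simp only [Function.iterate_one, derivative_C_mul, eval_mul, eval_C,
        eval_multiset_prod_X_sub_C_derivative hxt]
      exact mul_eq_zero_of_right _ (prod_eq_zero (mem_map.2 ⟨x, h, sub_self x⟩))
    obtain ⟨c, hct, hcx⟩ : ∃ c ∈ t, c ≠ x := by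
      by_cases hax : a = x
      · exact ⟨b, hbt, hax ▸ hab.symm⟩
      · exact ⟨a, hat, hax⟩
    rw [← cons_erase hxt, map_cons, prod_cons]
    exact ratioRNum_X_sub_C_mul_prod_pos hsimple ((mem_erase_of_ne hcx).2 hct)
  · exact ratioRNum_prod_pos hxt hat hbt hab

end Ordered

theorem splits_of_forall_isRoot_im_eq_zero {p : ℝ[X]}
    (h : ∀ z : ℂ, (p.map (algebraMap ℝ ℂ)).IsRoot z → z.im = 0) : p.Splits :=
  Splits.of_splits_map (algebraMap ℝ ℂ) (IsAlgClosed.splits _) fun z hz ↦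
    ⟨z.re, Complex.ext (by simp) (by simp [h z (mem_roots'.1 hz).2])⟩

noncomputable def ratioR (p : ℝ[X]) (x : ℝ) : ℝ :=
  eval x p * eval x (derivative^[2] p) / eval x (derivative^[1] p) ^ 2

noncomputable def ratioRDeriv (p : ℝ[X]) (x : ℝ) : ℝ :=
  (eval x (derivative^[1] p) ^ 2 * eval x (derivative^[2] p)
    + eval x p * eval x (derivative^[1] p) * eval x (derivative^[3] p)
    - 2 * eval x p * eval x (derivative^[2] p) ^ 2) / eval x (derivative^[1] p) ^ 3

variable {p : ℝ[X]} {x : ℝ}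

theorem hasDerivAt_ratioR (hx : eval x (derivative^[1] p) ≠ 0) :
    HasDerivAt (ratioR p) (ratioRDeriv p x) x := by
  have h₀ := p.hasDerivAt x
  have h₁ := (derivative^[1] p).hasDerivAt x
  have h₂ := (derivative^[2] p).hasDerivAt x
  refine ((h₀.fun_mul h₂).fun_div (h₁.fun_pow 2) (pow_ne_zero 2 hx)).congr_deriv ?_
  simp only [ratioRDeriv, Function.iterate_succ_apply', Function.iterate_zero_apply] at hx ⊢
  field_simp
  ring

theorem hasDerivAt_ratioRDeriv (hx : eval x (derivative^[1] p) ≠ 0) :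
    HasDerivAt (ratioRDeriv p) (-ratioRNum p x / eval x (derivative^[1] p) ^ 4) x := by
  have h₀ := p.hasDerivAt x
  have h₁ := (derivative^[1] p).hasDerivAt x
  have h₂ := (derivative^[2] p).hasDerivAt x
  have h₃ := (derivative^[3] p).hasDerivAt x
  have hnum := (((h₁.fun_pow 2).fun_mul h₂).fun_add ((h₀.fun_mul h₁).fun_mul h₃)).fun_sub
    ((h₀.const_mul 2).fun_mul (h₂.fun_pow 2))
  refine (hnum.fun_div (h₁.fun_pow 3) (pow_ne_zero 3 hx)).congr_deriv ?_
  simp only [ratioRNum, Function.iterate_succ_apply', Function.iterate_zero_apply] at hx ⊢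
  field_simp
  ring

theorem deriv_deriv_ratioR (hx : eval x (derivative^[1] p) ≠ 0) :
    deriv (deriv (ratioR p)) x = -ratioRNum p x / eval x (derivative^[1] p) ^ 4 := by
  have hderiv : deriv (ratioR p) =ᶠ[nhds x] ratioRDeriv p :=
    ((derivative^[1] p).continuous.continuousAt.eventually_ne hx).mono
      fun y hy ↦ (hasDerivAt_ratioR hy).deriv
  rw [hderiv.deriv_eq, (hasDerivAt_ratioRDeriv hx).deriv]

end Polynomial

theorem R_second_deriv_neg_general (p : ℝ[X])
    (hreal : ∀ z : ℂ, (p.map (algebraMap ℝ ℂ)).IsRoot z → z.im = 0)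
    (hdist : ∃ x y : ℝ, x ≠ y ∧ p.IsRoot x ∧ p.IsRoot y)
    (R : ℝ → ℝ)
    (hR : R = fun x =>
      p.eval x * (derivative (derivative p)).eval x / ((derivative p).eval x) ^ 2) :
    ∀ x : ℝ, (derivative p).eval x ≠ 0 → deriv (deriv R) x < 0 := by
  intro x hx
  obtain ⟨a, b, hab, ha, hb⟩ := hdist
  subst hR
  change deriv (deriv (ratioR p)) x < 0
  rw [deriv_deriv_ratioR hx]
  have hN := ratioRNum_pos_of_splits (splits_of_forall_isRoot_im_eq_zero hreal) hx ha hb hab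
  exact div_neg_of_neg_of_pos (neg_neg_of_pos hN) (by positivity)

/-- Let `p` be a real polynomial of degree `n ≥ 2` with only real zeroes and at
least two distinct zeroes. Then the second derivative of
`R(x) = p(x)p''(x)/(p'(x))²` is negative at every real point where `p'(x) ≠ 0`,
i.e. `R` is strictly concave between consecutive poles. -/
theorem R_second_deriv_neg (p : ℝ[X]) (n : ℕ) (hn : p.natDegree = n) (hn2 : 2 ≤ n)
    (hreal : ∀ z : ℂ, (p.map (algebraMap ℝ ℂ)).IsRoot z → z.im = 0)
    (hdist : ∃ x y : ℝ, x ≠ y ∧ p.IsRoot x ∧ p.IsRoot y)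
    (R : ℝ → ℝ)
    (hR : R = fun x =>
      p.eval x * (derivative (derivative p)).eval x / ((derivative p).eval x) ^ 2) :
    ∀ x : ℝ, (derivative p).eval x ≠ 0 → deriv (deriv R) x < 0 :=
  R_second_deriv_neg_general p hreal hdist R hR
end

section
/- Let p be a real polynomial, κ > 0, and suppose on an interval (a,b) we have p ≠ 0, p' ≠ 0, p'' ≠ 0. Define F_κ[p] = p·p'' − κ(p')² and F̂_κ[p] = p'·p''' − (2 − 1/κ)(p'')². Then the identity κ·(p'/(p'')²)·F̂_κ[p](x) = (F_κ[p]/p'')'(x) holds for all x ∈ (a,b); in particular, if F_κ[p](ζ) = 0 at some ζ ∈ (a,b), then F̂_κ[p](ζ) = (p''(ζ)/(κ p'(ζ)))·F_κ[p]'(ζ). -/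
/-!
With `F = F_κ[p]`, the quotient rule gives `(F / p'')' = (p'' F' − p''' F) / p''²`, and the
numerator equals `κ p' F̂_κ[p]` as a polynomial identity. At a zero of `F` it reduces to
`p'' F' = κ p' F̂_κ[p]`.
-/

open Polynomial

namespace Polynomial

variable {R : Type*}

section CommRing

variable [CommRing R]

noncomputable def fKappa (κ : R) (p : R[X]) : R[X] :=
  p * derivative (derivative p) - C κ * derivative p ^ 2

theorem derivative_fKappa (κ : R) (p : R[X]) :
    derivative (fKappa κ p) = (1 - 2 * C κ) * derivative p * derivative (derivative p)
      + p * derivative (derivative (derivative p)) := by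
  simp only [fKappa, derivative_mul, derivative_pow, derivative_C, map_sub,
    Nat.cast_ofNat, C_ofNat]
  ring

end CommRing

section Field

variable [Field R]

noncomputable def fKappaHat (κ : R) (p : R[X]) : R[X] :=
  derivative p * derivative (derivative (derivative p))
    - C (2 - 1 / κ) * derivative (derivative p) ^ 2

/-- The `p p'' p'''` terms cancel, leaving only multiples of `p'`. -/
theorem derivative_derivative_mul_derivative_fKappa_sub {κ : R} (hκ : κ ≠ 0) (p : R[X]) :
    derivative (derivative p) * derivative (fKappa κ p)
        - derivative (derivative (derivative p)) * fKappa κ p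
      = C κ * derivative p * fKappaHat κ p := by
  have hC : C κ * C (2 - 1 / κ) = 2 * C κ - 1 := by
    rw [← C_mul, mul_sub, mul_one_div_cancel hκ, map_sub, C_mul, C_ofNat, C_1, mul_comm]
  rw [derivative_fKappa, fKappa, fKappaHat]
  linear_combination derivative p * derivative (derivative p) ^ 2 * hC

end Field

theorem deriv_eval_div_eval {𝕜 : Type*} [NontriviallyNormedField 𝕜] (f g : 𝕜[X]) {x : 𝕜}
    (hg : g.eval x ≠ 0) :
    deriv (fun y => f.eval y / g.eval y) x
      = (g * derivative f - derivative g * f).eval x / g.eval x ^ 2 := by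
  have h : HasDerivAt (fun y => f.eval y / g.eval y) _ x :=
    (f.hasDerivAt x).div (g.hasDerivAt x) hg
  rw [h.deriv, eval_sub, eval_mul, eval_mul]
  ring

end Polynomial

theorem key_identity_F_hat_general (p : ℝ[X]) (κ : ℝ) (hκ : 0 < κ) (a b : ℝ)
    (hp' : ∀ x ∈ Set.Ioo a b, (derivative p).eval x ≠ 0)
    (hp'' : ∀ x ∈ Set.Ioo a b, (derivative (derivative p)).eval x ≠ 0) :
    (∀ x ∈ Set.Ioo a b,
      κ * ((derivative p).eval x / ((derivative (derivative p)).eval x) ^ 2)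
          * ((derivative p) * (derivative (derivative (derivative p)))
              - C (2 - 1 / κ) * (derivative (derivative p)) ^ 2).eval x
        = deriv (fun y =>
            (p * derivative (derivative p) - C κ * (derivative p) ^ 2).eval y
              / (derivative (derivative p)).eval y) x) ∧
    (∀ ζ ∈ Set.Ioo a b,
      (p * derivative (derivative p) - C κ * (derivative p) ^ 2).eval ζ = 0 →
      ((derivative p) * (derivative (derivative (derivative p)))
          - C (2 - 1 / κ) * (derivative (derivative p)) ^ 2).eval ζ
        = (derivative (derivative p)).eval ζ / (κ * (derivative p).eval ζ)
            * (derivative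
                (p * derivative (derivative p) - C κ * (derivative p) ^ 2)).eval ζ) := by
  have key (x : ℝ) :=
    congrArg (eval x) (derivative_derivative_mul_derivative_fKappa_sub hκ.ne' p)
  refine ⟨fun x hx => ?_, fun ζ hζ hF => ?_⟩
  · change _ = deriv (fun y => (fKappa κ p).eval y / _) x
    rw [deriv_eval_div_eval _ _ (hp'' x hx), key x]
    simp only [eval_mul, eval_C, fKappaHat]
    ring
  · change (fKappaHat κ p).eval ζ = _ / _ * (derivative (fKappa κ p)).eval ζ
    change (fKappa κ p).eval ζ = 0 at hF
    have h := key ζ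
    simp only [eval_sub, eval_mul, eval_C, hF, mul_zero, sub_zero] at h
    field_simp [hp' ζ hζ, hκ.ne']
    linear_combination -h

/-- **Key identity (A.5)/(A.10).** Let `p` be a real polynomial, `κ > 0`, and
suppose `p`, `p'`, `p''` have no zeroes on `(a, b)`. With
`F_κ[p] = p·p'' − κ(p')²` and `F̂_κ[p] = p'·p''' − (2 − 1/κ)(p'')²`, the identity
`κ·(p'(x)/(p''(x))²)·F̂_κ[p](x) = (F_κ[p]/p'')'(x)` holds on `(a, b)`; in
particular, if `F_κ[p](ζ) = 0` for some `ζ ∈ (a, b)`, then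
`F̂_κ[p](ζ) = (p''(ζ)/(κ·p'(ζ)))·F_κ[p]'(ζ)`. -/
theorem key_identity_F_hat (p : ℝ[X]) (κ : ℝ) (hκ : 0 < κ) (a b : ℝ)
    (hp : ∀ x ∈ Set.Ioo a b, p.eval x ≠ 0)
    (hp' : ∀ x ∈ Set.Ioo a b, (derivative p).eval x ≠ 0)
    (hp'' : ∀ x ∈ Set.Ioo a b, (derivative (derivative p)).eval x ≠ 0) :
    (∀ x ∈ Set.Ioo a b,
      κ * ((derivative p).eval x / ((derivative (derivative p)).eval x) ^ 2)
          * ((derivative p) * (derivative (derivative (derivative p)))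
              - C (2 - 1 / κ) * (derivative (derivative p)) ^ 2).eval x
        = deriv (fun y =>
            (p * derivative (derivative p) - C κ * (derivative p) ^ 2).eval y
              / (derivative (derivative p)).eval y) x) ∧
    (∀ ζ ∈ Set.Ioo a b,
      (p * derivative (derivative p) - C κ * (derivative p) ^ 2).eval ζ = 0 →
      ((derivative p) * (derivative (derivative (derivative p)))
          - C (2 - 1 / κ) * (derivative (derivative p)) ^ 2).eval ζ
        = (derivative (derivative p)).eval ζ / (κ * (derivative p).eval ζ)
            * (derivative
                (p * derivative (derivative p) - C κ * (derivative p) ^ 2)).eval ζ) :=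
  key_identity_F_hat_general p κ hκ a b hp' hp''
end
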